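/- Let 𝒞 be a 3XOR instance with n variables and m = cn equations, where c ≥ 1, let δ ≥ 0, and let π : V(G_𝒞) → V(G_{homog(𝒞)}) be a bijection with GI(G_𝒞, G_{homog(𝒞)}; π) ≥ 1 − δ. Define A = {i ∈ [m] : π(V_{C_i}) = V_{homog(C_{i'})} for some i' ∈ [m]} and B = {j ∈ [n] : π(V_{x_j}) = V_{x_{j'}} for some j' ∈ [n]}. Then |A| ≥ (1 − 19δ)m and |B| ≥ (1 − 95cδ)n. -/

import Mathlib

open scoped Classical

noncomputable section

namespace Giso

/-- The finset of edges of a simple graph on a finite vertex type. -/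
def edges {V : Type*} [Fintype V] (G : SimpleGraph V) : Finset (Sym2 V) :=
  Finset.univ.filter fun e => e ∈ G.edgeSet

/-- The fraction of edges of `G` carried to edges of `H` by the bijection `π`. -/
def GIval {V W : Type*} [Fintype V] [Fintype W] (G : SimpleGraph V) (H : SimpleGraph W)
    (π : V ≃ W) : ℝ :=
  (((edges G).filter fun e => Sym2.map (fun x => π x) e ∈ edges H).card : ℝ) /
    max ((edges G).card : ℝ) ((edges H).card : ℝ)

/-- A 3XOR equation on `n` variables: three distinct variable indices and a
right-hand side in `Z₂`. -/
structure XorEq (n : ℕ) where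
  idx : Fin 3 → Fin n
  rhs : ZMod 2
  inj : Function.Injective idx

/-- A 3XOR instance: a list of `m` equations. -/
abbrev XorInstance (n m : ℕ) := Fin m → XorEq n

/-- The homogeneous version of an equation: the right-hand side is replaced by `0`. -/
def XorEq.homog {n : ℕ} (C : XorEq n) : XorEq n := ⟨C.idx, 0, C.inj⟩

/-- The homogeneous version of an instance. -/
def homogInst {n m : ℕ} (𝒞 : XorInstance n m) : XorInstance n m := fun i => (𝒞 i).homog

/-- The satisfying assignments of an equation (there are four of them). -/
abbrev SatAssign {n : ℕ} (C : XorEq n) : Type :=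
  {α : Fin 3 → ZMod 2 // α 0 + α 1 + α 2 = C.rhs}

/-- Vertices of the gadget graph `G_𝒞`. -/
abbrev GVert {n m : ℕ} (𝒞 : XorInstance n m) : Type :=
  (Fin n × ZMod 2) ⊕ (Σ i : Fin m, SatAssign (𝒞 i))

/-- The gadget graph `G_𝒞` associated to a 3XOR instance `𝒞`. -/
def gadgetGraph {n m : ℕ} (𝒞 : XorInstance n m) : SimpleGraph (GVert 𝒞) :=
  SimpleGraph.fromRel fun u v =>
    (∃ (j : Fin n) (a a' : ZMod 2), u = Sum.inl (j, a) ∧ v = Sum.inl (j, a')) ∨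
    (∃ (i : Fin m) (α α' : SatAssign (𝒞 i)), u = Sum.inr ⟨i, α⟩ ∧ v = Sum.inr ⟨i, α'⟩) ∨
    (∃ (i : Fin m) (α : SatAssign (𝒞 i)) (t : Fin 3),
      u = Sum.inl ((𝒞 i).idx t, α.1 t) ∧ v = Sum.inr ⟨i, α⟩)

/-- The set `V_C` of constraint vertices of equation `i` in `G_𝒞`. -/
def VC {n m : ℕ} (𝒞 : XorInstance n m) (i : Fin m) : Finset (GVert 𝒞) :=
  Finset.univ.filter fun v => ∃ α : SatAssign (𝒞 i), v = Sum.inr ⟨i, α⟩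

/-- The set `V_x` of the two variable vertices of variable `j` in `G_𝒞`. -/
def Vx {n m : ℕ} (𝒞 : XorInstance n m) (j : Fin n) : Finset (GVert 𝒞) :=
  Finset.univ.filter fun v => ∃ a : ZMod 2, v = Sum.inl (j, a)

/-!
A 4-clique of a gadget graph is always one of the sets `V_C`: a variable vertex lies in no
4-clique, because the two vertices of `V_x` have no common neighbour and at most two satisfying
assignments of an equation agree in a given coordinate. Hence a clique `V_{C_i}` none of whose
edges is destroyed by `π` is mapped onto some `V_{C_{i'}}`. Each destroyed edge lies in at most
one `V_C`, and there are at most `δ (18m + n) ≤ 19 δ m` destroyed edges, which bounds `m - |A|`.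
If `j ∉ B` and the edge of `V_{x_j}` is preserved, one of its endpoints is sent to a constraint
vertex of a clique `V_{C_{i'}}` that is the image of no `V_{C_i}`; there are at most
`4 (m - |A|)` such vertices, so `n - |B| ≤ 5 · 19 δ m = 95 c δ n`.
-/

open Finset

variable {n m : ℕ}

lemma SatAssign.ext_of_eq_of_eq {C : XorEq n} {α β : SatAssign C} {t s : Fin 3} (hts : t ≠ s)
    (ht : α.1 t = β.1 t) (hs : α.1 s = β.1 s) : α = β := by
  obtain ⟨α, hα⟩ := α; obtain ⟨β, hβ⟩ := β
  ext r
  fin_cases t <;> fin_cases s <;> fin_cases r <;> simp at * <;> grind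

lemma card_satAssign (C : XorEq n) : Fintype.card (SatAssign C) = 4 := by
  have : ∀ b : ZMod 2, Fintype.card {α : Fin 3 → ZMod 2 // α 0 + α 1 + α 2 = b} = 4 := by
    decide
  convert this C.rhs

lemma card_filter_satAssign_apply_eq_le (C : XorEq n) (t : Fin 3) (a : ZMod 2) :
    #{α : SatAssign C | α.1 t = a} ≤ 2 := by
  obtain ⟨s, hst⟩ := exists_ne t
  calc #{α : SatAssign C | α.1 t = a}
      ≤ #(univ : Finset (ZMod 2)) :=
        card_le_card_of_injOn (fun α => α.1 s) (fun _ _ => mem_univ _) fun α hα β hβ h =>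
          SatAssign.ext_of_eq_of_eq hst.symm
            ((mem_filter.1 hα).2.trans (mem_filter.1 hβ).2.symm) h
    _ = 2 := rfl

section GadgetGraph

variable {𝒞 : XorInstance n m} {S : Finset (GVert 𝒞)}

@[simp]
lemma gadgetGraph_adj_inl_inl {p q : Fin n × ZMod 2} :
    (gadgetGraph 𝒞).Adj (.inl p) (.inl q) ↔ p.1 = q.1 ∧ p.2 ≠ q.2 := by
  obtain ⟨j, a⟩ := p; obtain ⟨j', a'⟩ := q
  simp only [gadgetGraph, SimpleGraph.fromRel_adj]
  grind

@[simp]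
lemma gadgetGraph_adj_inr_inr {p q : Σ i : Fin m, SatAssign (𝒞 i)} :
    (gadgetGraph 𝒞).Adj (.inr p) (.inr q) ↔ p.1 = q.1 ∧ p ≠ q := by
  obtain ⟨i, α⟩ := p; obtain ⟨i', β⟩ := q
  simp only [gadgetGraph, SimpleGraph.fromRel_adj]
  aesop

@[simp]
lemma gadgetGraph_adj_inl_inr {p : Fin n × ZMod 2} {q : Σ i : Fin m, SatAssign (𝒞 i)} :
    (gadgetGraph 𝒞).Adj (.inl p) (.inr q) ↔ ∃ t, ((𝒞 q.1).idx t, q.2.1 t) = p := by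
  obtain ⟨i, α⟩ := q
  simp only [gadgetGraph, SimpleGraph.fromRel_adj]
  aesop

@[simp]
lemma gadgetGraph_adj_inr_inl {p : Fin n × ZMod 2} {q : Σ i : Fin m, SatAssign (𝒞 i)} :
    (gadgetGraph 𝒞).Adj (.inr q) (.inl p) ↔ ∃ t, ((𝒞 q.1).idx t, q.2.1 t) = p := by
  rw [SimpleGraph.adj_comm, gadgetGraph_adj_inl_inr]

@[simp]
lemma inr_mem_VC {i : Fin m} {q : Σ i : Fin m, SatAssign (𝒞 i)} : .inr q ∈ VC 𝒞 i ↔ q.1 = i := by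
  obtain ⟨i', α⟩ := q
  simp only [VC, mem_filter, mem_univ, true_and]
  constructor
  · rintro ⟨β, h⟩
    exact congrArg Sigma.fst (Sum.inr_injective h)
  · rintro rfl
    exact ⟨α, rfl⟩

@[simp]
lemma inl_notMem_VC {i : Fin m} {p : Fin n × ZMod 2} : .inl p ∉ VC 𝒞 i := by
  simp [VC]

lemma eq_of_mem_VC {i i' : Fin m} {v : GVert 𝒞} (hi : v ∈ VC 𝒞 i) (hi' : v ∈ VC 𝒞 i') :
    i = i' := by
  cases v with
  | inl p => simp at hi
  | inr q => simp only [inr_mem_VC] at hi hi'; rw [← hi, hi']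

lemma card_VC (i : Fin m) : #(VC 𝒞 i) = 4 := by
  have : VC 𝒞 i = univ.image fun α : SatAssign (𝒞 i) => .inr ⟨i, α⟩ := by
    ext v
    simp [VC, eq_comm]
  rw [this, card_image_of_injective _ fun α β h => by simpa using h, card_univ, card_satAssign]

lemma VC_injective : Function.Injective (VC 𝒞) := fun i i' h => by
  obtain ⟨v, hv⟩ : (VC 𝒞 i).Nonempty := card_pos.1 (by rw [card_VC]; norm_num)
  exact eq_of_mem_VC hv (h ▸ hv)

lemma Vx_eq_pair {j : Fin n} {a b : ZMod 2} (hab : a ≠ b) :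
    Vx 𝒞 j = {.inl (j, a), .inl (j, b)} := by
  ext v
  simp only [Vx, mem_filter, mem_univ, true_and, mem_insert, mem_singleton]
  constructor
  · rintro ⟨c, rfl⟩
    have : c = a ∨ c = b := by revert a b c; decide
    rcases this with rfl | rfl <;> simp
  · rintro (rfl | rfl) <;> exact ⟨_, rfl⟩

lemma isNClique_VC (i : Fin m) : (gadgetGraph 𝒞).IsNClique 4 (VC 𝒞 i) := by
  refine ⟨fun u hu v hv huv => ?_, card_VC i⟩
  obtain ⟨α, rfl⟩ := (mem_filter.1 hu).2
  obtain ⟨β, rfl⟩ := (mem_filter.1 hv).2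
  simpa using huv

lemma eq_of_adj_inl_of_adj_inl {j : Fin n} {a b : ZMod 2} {v : GVert 𝒞}
    (ha : (gadgetGraph 𝒞).Adj (.inl (j, a)) v) (hb : (gadgetGraph 𝒞).Adj (.inl (j, b)) v) :
    a = b := by
  cases v with
  | inl p =>
    simp only [gadgetGraph_adj_inl_inl] at ha hb
    have : ∀ x y z : ZMod 2, x ≠ z → y ≠ z → x = y := by decide
    exact this a b p.2 ha.2 hb.2
  | inr q =>
    obtain ⟨t, ht⟩ := gadgetGraph_adj_inl_inr.1 ha
    obtain ⟨t', ht'⟩ := gadgetGraph_adj_inl_inr.1 hb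
    simp only [Prod.mk.injEq] at ht ht'
    obtain rfl : t = t' := (𝒞 q.1).inj (ht.1.trans ht'.1.symm)
    exact ht.2.symm.trans ht'.2

lemma inl_notMem_of_isNClique_four (hS : (gadgetGraph 𝒞).IsNClique 4 S) (p : Fin n × ZMod 2) :
    .inl p ∉ S := by
  intro hp
  obtain ⟨j, a⟩ := p
  set T := S.erase (.inl (j, a))
  have hT : (gadgetGraph 𝒞).IsNClique 3 T := hS.erase_of_mem hp
  have hadj : ∀ v ∈ T, (gadgetGraph 𝒞).Adj (.inl (j, a)) v := fun v hv =>
    hS.isClique hp (mem_of_mem_erase hv) (ne_of_mem_erase hv).symm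
  have hinr : ∀ v ∈ T, ∃ q, v = .inr q := by
    intro v hv
    cases v with
    | inr q => exact ⟨q, rfl⟩
    | inl q =>
      obtain ⟨w, hw, hwv⟩ := T.exists_mem_ne (by rw [hT.card_eq]; norm_num) (.inl q)
      obtain ⟨hj, hne⟩ := gadgetGraph_adj_inl_inl.1 (hadj _ hv)
      obtain ⟨j', b⟩ := q
      subst hj
      exact (hne (eq_of_adj_inl_of_adj_inl (hadj w hw) (hT.isClique hv hw hwv.symm))).elim
  obtain ⟨v₀, hv₀⟩ : T.Nonempty := card_pos.1 (by rw [hT.card_eq]; norm_num)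
  obtain ⟨⟨i, α₀⟩, rfl⟩ := hinr v₀ hv₀
  obtain ⟨t, ht⟩ := gadgetGraph_adj_inl_inr.1 (hadj _ hv₀)
  have hsub : T ⊆ ({α : SatAssign (𝒞 i) | α.1 t = a} : Finset _).image
      fun α => (.inr ⟨i, α⟩ : GVert 𝒞) := by
    intro v hv
    obtain ⟨⟨i', β⟩, rfl⟩ := hinr v hv
    obtain rfl : i' = i := by
      by_cases h : (.inr ⟨i', β⟩ : GVert 𝒞) = .inr ⟨i, α₀⟩
      · exact congrArg Sigma.fst (Sum.inr_injective h)
      · exact (gadgetGraph_adj_inr_inr.1 (hT.isClique hv hv₀ h)).1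
    obtain ⟨t', ht'⟩ := gadgetGraph_adj_inl_inr.1 (hadj _ hv)
    simp only [Prod.mk.injEq] at ht ht'
    obtain rfl : t' = t := (𝒞 i').inj (ht'.1.trans ht.1.symm)
    exact mem_image.2 ⟨β, by simp [ht'.2]⟩
  have := (card_le_card hsub).trans (card_image_le.trans (card_filter_satAssign_apply_eq_le _ t a))
  rw [hT.card_eq] at this
  omega

lemma exists_eq_VC_of_isNClique_four (hS : (gadgetGraph 𝒞).IsNClique 4 S) :
    ∃ i, S = VC 𝒞 i := by
  have hinr : ∀ v ∈ S, ∃ q, v = .inr q := fun v hv => by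
    cases v with
    | inl p => exact absurd hv (inl_notMem_of_isNClique_four hS p)
    | inr q => exact ⟨q, rfl⟩
  obtain ⟨v₀, hv₀⟩ : S.Nonempty := card_pos.1 (by rw [hS.card_eq]; norm_num)
  obtain ⟨q, rfl⟩ := hinr v₀ hv₀
  refine ⟨q.1, eq_of_subset_of_card_le (fun v hv => ?_) (by rw [card_VC, hS.card_eq])⟩
  obtain ⟨q', rfl⟩ := hinr v hv
  by_cases h : (.inr q' : GVert 𝒞) = .inr q
  · rw [h]; simp
  · simpa using (gadgetGraph_adj_inr_inr.1 (hS.isClique hv hv₀ h)).1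

end GadgetGraph

def gadgetEdge (𝒞 : XorInstance n m) :
    Fin n ⊕ (Σ i, {e : Sym2 (SatAssign (𝒞 i)) // ¬ e.IsDiag}) ⊕
      ((Σ i, SatAssign (𝒞 i)) × Fin 3) → Sym2 (GVert 𝒞)
  | .inl j => s(.inl (j, 0), .inl (j, 1))
  | .inr (.inl ⟨i, e⟩) => e.1.map fun α => .inr ⟨i, α⟩
  | .inr (.inr (q, t)) => s(.inl ((𝒞 q.1).idx t, q.2.1 t), .inr q)

lemma mem_range_gadgetEdge {𝒞 : XorInstance n m} {e : Sym2 (GVert 𝒞)}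
    (he : e ∈ (gadgetGraph 𝒞).edgeSet) : e ∈ Set.range (gadgetEdge 𝒞) := by
  induction e using Sym2.ind with | _ u v => ?_
  rw [SimpleGraph.mem_edgeSet] at he
  rcases u with ⟨j, a⟩ | ⟨i, α⟩ <;> rcases v with ⟨j', b⟩ | ⟨i', β⟩
  · obtain ⟨rfl, hab⟩ := gadgetGraph_adj_inl_inl.1 he
    refine ⟨.inl j, ?_⟩
    have key : ∀ a b : ZMod 2, a ≠ b → a = 0 ∧ b = 1 ∨ a = 1 ∧ b = 0 := by decide
    rcases key a b hab with ⟨rfl, rfl⟩ | ⟨rfl, rfl⟩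
    · rfl
    · exact Sym2.eq_swap
  · obtain ⟨t, ht⟩ := gadgetGraph_adj_inl_inr.1 he
    exact ⟨.inr (.inr (⟨i', β⟩, t)), by simp [gadgetEdge, ← ht]⟩
  · obtain ⟨t, ht⟩ := gadgetGraph_adj_inr_inl.1 he
    exact ⟨.inr (.inr (⟨i, α⟩, t)), by simp [gadgetEdge, ← ht, Sym2.eq_swap]⟩
  · obtain ⟨hi, hne⟩ := gadgetGraph_adj_inr_inr.1 he
    dsimp only at hi
    subst hi
    exact ⟨.inr (.inl ⟨i, s(α, β), by simpa using hne⟩), rfl⟩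

lemma card_edges_gadgetGraph_le (𝒞 : XorInstance n m) :
    #(edges (gadgetGraph 𝒞)) ≤ 18 * m + n := by
  calc #(edges (gadgetGraph 𝒞))
      ≤ #(univ : Finset (Fin n ⊕ (Σ i, {e : Sym2 (SatAssign (𝒞 i)) // ¬ e.IsDiag}) ⊕
          ((Σ i, SatAssign (𝒞 i)) × Fin 3))) :=
        card_le_card_of_surjOn (gadgetEdge 𝒞) fun e he => by
          obtain ⟨x, hx⟩ := mem_range_gadgetEdge (by simpa [edges] using he)
          exact ⟨x, by simp, hx⟩
    _ = 18 * m + n := by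
        simp only [card_univ, Fintype.card_sum, Fintype.card_fin, Fintype.card_sigma,
          Fintype.card_prod, Sym2.card_subtype_not_diag, card_satAssign]
        simp [Nat.choose]
        ring

section Bijections

variable {V W : Type*}

def unpreservedEdges [Fintype V] [Fintype W] (G : SimpleGraph V) (H : SimpleGraph W)
    (π : V ≃ W) : Finset (Sym2 V) :=
  (edges G).filter fun e => Sym2.map (fun x => π x) e ∉ edges H

lemma card_unpreservedEdges_le [Fintype V] [Fintype W] {G : SimpleGraph V} {H : SimpleGraph W}
    {π : V ≃ W} {δ : ℝ} {M : ℕ} (hπ : 1 - δ ≤ GIval G H π) (hδ : 0 ≤ δ) (hG : #(edges G) ≤ M)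
    (hH : #(edges H) ≤ M) : (#(unpreservedEdges G H π) : ℝ) ≤ δ * M := by
  set D := max (#(edges G) : ℝ) #(edges H)
  have hsplit : (#((edges G).filter fun e => Sym2.map (fun x => π x) e ∈ edges H) : ℝ) +
      #(unpreservedEdges G H π) = #(edges G) := by
    exact_mod_cast card_filter_add_card_filter_not _
  have hDM : D ≤ M := max_le (by exact_mod_cast hG) (by exact_mod_cast hH)
  have hGD : (#(edges G) : ℝ) ≤ D := le_max_left _ _
  rcases ((Nat.cast_nonneg _).trans hGD).eq_or_lt with hD | hD
  · have : (0 : ℝ) ≤ #((edges G).filter fun e => Sym2.map (fun x => π x) e ∈ edges H) :=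
      Nat.cast_nonneg _
    nlinarith
  · have := (le_div_iff₀ hD).1 hπ
    nlinarith [mul_le_mul_of_nonneg_left hDM hδ]

lemma isNClique_image_of_adj [DecidableEq W] {G : SimpleGraph V} {H : SimpleGraph W} (π : V ≃ W)
    {S : Finset V} {k : ℕ} (hS : G.IsNClique k S)
    (h : ∀ u ∈ S, ∀ v ∈ S, G.Adj u v → H.Adj (π u) (π v)) :
    H.IsNClique k (S.image fun v => π v) := by
  refine ⟨?_, (card_image_of_injective _ π.injective).trans hS.card_eq⟩
  rw [coe_image]
  rintro _ ⟨u, hu, rfl⟩ _ ⟨v, hv, rfl⟩ hne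
  exact h u hu v hv (hS.isClique hu hv fun huv => hne (huv ▸ rfl))

end Bijections

section Matching

variable {𝒞 𝒟 : XorInstance n m} (π : GVert 𝒞 ≃ GVert 𝒟)

def matchedCliques : Finset (Fin m) :=
  univ.filter fun i => ∃ i' : Fin m, (VC 𝒞 i).image (fun v => π v) = VC 𝒟 i'

def coveredCliques : Finset (Fin m) :=
  univ.filter fun i' => ∃ i : Fin m, (VC 𝒞 i).image (fun v => π v) = VC 𝒟 i'

def matchedVars : Finset (Fin n) :=
  univ.filter fun j => ∃ j' : Fin n, (Vx 𝒞 j).image (fun v => π v) = Vx 𝒟 j'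

lemma exists_unpreservedEdges_mem_sym2_VC {i : Fin m} (hi : i ∉ matchedCliques π) :
    ∃ e ∈ unpreservedEdges (gadgetGraph 𝒞) (gadgetGraph 𝒟) π, e ∈ (VC 𝒞 i).sym2 := by
  by_contra! h
  refine hi (mem_filter.2 ⟨mem_univ _, exists_eq_VC_of_isNClique_four
    (isNClique_image_of_adj π (isNClique_VC i) fun u hu v hv huv => ?_)⟩)
  by_contra hnadj
  refine h s(u, v) ?_ (mk_mem_sym2_iff.2 ⟨hu, hv⟩)
  simpa [unpreservedEdges, edges, huv] using hnadj

lemma card_compl_matchedCliques_le :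
    #(matchedCliques π)ᶜ ≤ #(unpreservedEdges (gadgetGraph 𝒞) (gadgetGraph 𝒟) π) :=
  card_le_card_of_forall_subsingleton (fun i e => e ∈ (VC 𝒞 i).sym2)
    (fun _ hi => exists_unpreservedEdges_mem_sym2_VC π (by simpa using hi))
    fun e _ _ h₁ _ h₂ =>
      eq_of_mem_VC (mem_sym2_iff.1 h₁.2 _ e.out_fst_mem) (mem_sym2_iff.1 h₂.2 _ e.out_fst_mem)

lemma card_compl_coveredCliques_le : #(coveredCliques π)ᶜ ≤ #(matchedCliques π)ᶜ := by
  have : #(matchedCliques π) ≤ #(coveredCliques π) :=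
    card_le_card_of_forall_subsingleton (fun i i' => (VC 𝒞 i).image (fun v => π v) = VC 𝒟 i')
      (fun i hi => by
        obtain ⟨i', h⟩ := (mem_filter.1 hi).2
        exact ⟨i', mem_filter.2 ⟨mem_univ _, i, h⟩, h⟩)
      fun _ _ _ h₁ _ h₂ => VC_injective (image_injective π.injective (h₁.2.trans h₂.2.symm))
  rw [card_compl, card_compl]
  omega

lemma exists_mem_VC_of_notMem_matchedVars {j : Fin n} (hj : j ∉ matchedVars π)
    (hpres : s(.inl (j, 0), .inl (j, 1)) ∉ unpreservedEdges (gadgetGraph 𝒞) (gadgetGraph 𝒟) π) :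
    ∃ a i', i' ∉ coveredCliques π ∧ π (.inl (j, a)) ∈ VC 𝒟 i' := by
  have hadj : (gadgetGraph 𝒟).Adj (π (.inl (j, 0))) (π (.inl (j, 1))) := by
    simpa [unpreservedEdges, edges] using hpres
  obtain ⟨a, q, hq⟩ : ∃ a q, π (.inl (j, a)) = .inr q := by
    rcases h₀ : π (.inl (j, 0)) with ⟨j', b₀⟩ | q₀
    · rcases h₁ : π (.inl (j, 1)) with ⟨j'', b₁⟩ | q₁
      · rw [h₀, h₁, gadgetGraph_adj_inl_inl] at hadj
        obtain ⟨rfl, hb⟩ := hadj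
        refine (hj (mem_filter.2 ⟨mem_univ _, j', ?_⟩)).elim
        rw [Vx_eq_pair zero_ne_one, Vx_eq_pair hb, image_insert, image_singleton, h₀, h₁]
      · exact ⟨1, q₁, h₁⟩
    · exact ⟨0, q₀, h₀⟩
  refine ⟨a, q.1, fun hcov => ?_, by simp [hq]⟩
  obtain ⟨i, hi⟩ := (mem_filter.1 hcov).2
  have : π (.inl (j, a)) ∈ (VC 𝒞 i).image (fun v => π v) := by simp [hi, hq]
  obtain ⟨v, hv, hvj⟩ := mem_image.1 this
  exact inl_notMem_VC (π.injective hvj ▸ hv)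

lemma card_compl_matchedVars_le :
    #(matchedVars π)ᶜ ≤
      #(unpreservedEdges (gadgetGraph 𝒞) (gadgetGraph 𝒟) π) + 4 * #(coveredCliques π)ᶜ := by
  set bad := unpreservedEdges (gadgetGraph 𝒞) (gadgetGraph 𝒟) π
  set U := (coveredCliques π)ᶜ.biUnion (VC 𝒟)
  have hsub : (matchedVars π)ᶜ ⊆
      univ.filter (fun j => s(.inl (j, 0), .inl (j, 1)) ∈ bad) ∪
        univ.filter (fun j => ∃ a, π (.inl (j, a)) ∈ U) := by
    intro j hj
    by_cases hpres : s(.inl (j, 0), .inl (j, 1)) ∈ bad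
    · simp [hpres]
    · obtain ⟨a, i', hi', ha⟩ := exists_mem_VC_of_notMem_matchedVars π (by simpa using hj) hpres
      exact mem_union_right _ (mem_filter.2 ⟨mem_univ _, a, mem_biUnion.2 ⟨i', by simpa, ha⟩⟩)
  have h₁ : #(univ.filter fun j => s(.inl (j, 0), .inl (j, 1)) ∈ bad) ≤ #bad :=
    card_le_card_of_injOn (fun j => s(.inl (j, 0), .inl (j, 1))) (fun j hj => (mem_filter.1 hj).2)
      fun j _ j' _ h => by simpa using h
  have h₂ : #(univ.filter fun j => ∃ a, π (.inl (j, a)) ∈ U) ≤ #U :=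
    card_le_card_of_forall_subsingleton (fun j w => ∃ a, π (.inl (j, a)) = w)
      (fun j hj => by
        obtain ⟨a, ha⟩ := (mem_filter.1 hj).2
        exact ⟨_, ha, a, rfl⟩)
      fun _ _ _ ⟨_, _, h₁⟩ _ ⟨_, _, h₂⟩ =>
        congrArg Prod.fst (Sum.inl_injective (π.injective (h₁.trans h₂.symm)))
  have h₃ : #U ≤ 4 * #(coveredCliques π)ᶜ :=
    card_biUnion_le.trans (by simp [card_VC, mul_comm])
  calc #(matchedVars π)ᶜ ≤ _ := card_le_card hsub
    _ ≤ _ := card_union_le _ _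
    _ ≤ _ := by omega

end Matching

/-- Let `𝒞` be a 3XOR instance with `n` variables and `m = cn`
equations (`c ≥ 1`) and let `π` be a bijection from `V(G_𝒞)` to `V(G_{homog(𝒞)})` with
`GI(G_𝒞, G_{homog(𝒞)}; π) ≥ 1 − δ`.  With
`A = {i : π(V_{C_i}) = V_{homog(C_{i'})} for some i'}` and
`B = {j : π(V_{x_j}) = V_{x_{j'}} for some j'}`, one has `|A| ≥ (1 − 19δ)m` and
`|B| ≥ (1 − 95cδ)n`. -/
theorem clique_and_variable_correspondence (n m : ℕ) (c δ : ℝ) (hc : 1 ≤ c)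
    (hm : (m : ℝ) = c * n) (hδ : 0 ≤ δ) (𝒞 : XorInstance n m)
    (π : GVert 𝒞 ≃ GVert (homogInst 𝒞))
    (hπ : 1 - δ ≤ GIval (gadgetGraph 𝒞) (gadgetGraph (homogInst 𝒞)) π) :
    (1 - 19 * δ) * m ≤
      ((Finset.univ.filter fun i : Fin m =>
        ∃ i' : Fin m, (VC 𝒞 i).image (fun v => π v) = VC (homogInst 𝒞) i').card : ℝ) ∧
    (1 - 95 * c * δ) * n ≤
      ((Finset.univ.filter fun j : Fin n =>
        ∃ j' : Fin n, (Vx 𝒞 j).image (fun v => π v) = Vx (homogInst 𝒞) j').card : ℝ) := by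
  have hnm : (n : ℝ) ≤ m := by rw [hm]; nlinarith [(n.cast_nonneg : (0 : ℝ) ≤ n)]
  set bad := unpreservedEdges (gadgetGraph 𝒞) (gadgetGraph (homogInst 𝒞)) π
  have hbad : (#bad : ℝ) ≤ δ * (18 * m + n : ℕ) :=
    card_unpreservedEdges_le hπ hδ (card_edges_gadgetGraph_le 𝒞)
      (card_edges_gadgetGraph_le (homogInst 𝒞))
  have hA : (#(matchedCliques π)ᶜ : ℝ) ≤ #bad := by
    exact_mod_cast card_compl_matchedCliques_le π
  have hB : (#(matchedVars π)ᶜ : ℝ) ≤ #bad + 4 * #(matchedCliques π)ᶜ := by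
    exact_mod_cast (card_compl_matchedVars_le π).trans
      (Nat.add_le_add_left (Nat.mul_le_mul_left 4 (card_compl_coveredCliques_le π)) _)
  have hAm : (#(matchedCliques π) : ℝ) + #(matchedCliques π)ᶜ = m := by
    exact_mod_cast (card_add_card_compl _).trans (Fintype.card_fin m)
  have hBn : (#(matchedVars π) : ℝ) + #(matchedVars π)ᶜ = n := by
    exact_mod_cast (card_add_card_compl _).trans (Fintype.card_fin n)
  push_cast at hbad
  refine ⟨?_, ?_⟩
  · change _ ≤ (#(matchedCliques π) : ℝ)
    nlinarith
  · change _ ≤ (#(matchedVars π) : ℝ)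
    nlinarith

end Giso
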